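/- arXiv:2412.13099 — 2 statements merged into one kernel-verified Lean document; each statement's English description precedes it below -/
import Mathlib

section
/- Let f be a real number with 0 < f ≤ 1/2 and N a positive natural number. Let p = 1 - (1 - f)^N and let m = ⌈-1 / log₂(1 - p)⌉ (the median of the geometric distribution with success probability p). Then (ln 2 / N) · (f + f²)⁻¹ ≤ -1/log₂(1-p) and -1/log₂(1-p) ≤ (ln 2 / N) · f⁻¹. -/
theorem stmt_1 (f : ℝ) (hf0 : 0 < f) (hf : f ≤ 1/2) (N : ℕ) (hN : 0 < N)
    (p : ℝ) (hp : p = 1 - (1 - f)^N) :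
    (Real.log 2 / N) * (f + f^2)⁻¹ ≤ -1 / Real.logb 2 (1 - p) ∧
    -1 / Real.logb 2 (1 - p) ≤ (Real.log 2 / N) * f⁻¹ := by
  have h1f : (0:ℝ) < 1 - f := by linarith
  have hNpos : (0:ℝ) < N := Nat.cast_pos.mpr hN
  have hlog2 : (0:ℝ) < Real.log 2 := Real.log_pos (by norm_num)
  set L : ℝ := -Real.log (1 - f) with hL
  -- upper bound on -log: L ≤ f + f²
  have hLub : L ≤ f + f^2 := by
    have ht : (0:ℝ) ≤ f + f^2 := by nlinarith
    have hquad := Real.quadratic_le_exp_of_nonneg ht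
    have hexp : Real.exp (-(f + f^2)) ≤ 1 - f := by
      rw [Real.exp_neg]
      rw [inv_le_iff_one_le_mul₀ (lt_of_lt_of_le (by nlinarith) hquad)]
      have : 1 ≤ (1 - f) * (1 + (f + f^2) + (f + f^2)^2 / 2) := by nlinarith
      exact this.trans (by nlinarith [Real.exp_pos (f + f^2)])
    have := (Real.le_log_iff_exp_le h1f).mpr hexp
    simp only [hL]; linarith
  -- lower bound: f ≤ L
  have hLlb : f ≤ L := by
    have := Real.log_le_sub_one_of_pos h1f
    simp only [hL]; linarith
  have hLpos : 0 < L := lt_of_lt_of_le hf0 hLlb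
  -- rewrite logb
  have h1p : 1 - p = (1 - f)^N := by rw [hp]; ring
  have hlogb : Real.logb 2 (1 - p) = (N * (-L)) / Real.log 2 := by
    rw [h1p, Real.logb, Real.log_pow]
    simp [hL]
  have hkey : -1 / Real.logb 2 (1 - p) = Real.log 2 / (N * L) := by
    rw [hlogb]
    field_simp
  rw [hkey]
  constructor
  · rw [← div_eq_mul_inv, div_div]
    gcongr
  · rw [← div_eq_mul_inv, div_div]
    gcongr
end

section
/- Let f be a real number with 0 < f ≤ 1/(2N) for a positive natural number N, and suppose p is a real number satisfying 1 - N·f ≤ 1 - p ≤ 1 - f. Then ln 2 / (N·f + N²·f²) ≤ -1/log₂(1-p) ≤ ln 2 / f. -/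
theorem stmt_3 (N : ℕ) (hN : 0 < N) (f : ℝ) (hf0 : 0 < f) (hf : f ≤ 1 / (2 * N))
    (p : ℝ) (h1 : 1 - N * f ≤ 1 - p) (h2 : 1 - p ≤ 1 - f) :
    Real.log 2 / (N * f + N^2 * f^2) ≤ -1 / Real.logb 2 (1 - p) ∧
    -1 / Real.logb 2 (1 - p) ≤ Real.log 2 / f := by
  have hNpos : (0:ℝ) < N := by exact_mod_cast hN
  have hNf : N * f ≤ 1 / 2 := by
    have h := mul_le_mul_of_nonneg_left hf hNpos.le
    have h2' : (N:ℝ) * (1 / (2 * N)) = 1 / 2 := by field_simp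
    linarith
  have hpf : f ≤ p := by linarith
  have hpN : p ≤ N * f := by linarith
  have hp0 : 0 < p := lt_of_lt_of_le hf0 hpf
  have hp2 : p ≤ 1 / 2 := le_trans hpN hNf
  have h1p : (0:ℝ) < 1 - p := by linarith
  -- lower bound on L := -log(1-p)
  have hlogle : Real.log (1 - p) ≤ -p := by
    have := Real.log_le_sub_one_of_pos h1p
    linarith
  have hL1 : p ≤ -Real.log (1 - p) := by linarith
  -- upper bound: -log(1-p) ≤ p + p^2
  have hL2 : -Real.log (1 - p) ≤ p + p ^ 2 := by
    have ht0 : (0:ℝ) ≤ p + p ^ 2 := by positivity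
    have hexp : 1 + (p + p ^ 2) + (p + p ^ 2) ^ 2 / 2 ≤ Real.exp (p + p ^ 2) :=
      Real.quadratic_le_exp_of_nonneg ht0
    have key : 1 ≤ (1 - p) * Real.exp (p + p ^ 2) := by
      have : 1 ≤ (1 - p) * (1 + (p + p ^ 2) + (p + p ^ 2) ^ 2 / 2) := by nlinarith
      calc (1:ℝ) ≤ (1 - p) * (1 + (p + p ^ 2) + (p + p ^ 2) ^ 2 / 2) := this
        _ ≤ (1 - p) * Real.exp (p + p ^ 2) := by
            apply mul_le_mul_of_nonneg_left hexp h1p.le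
    have : Real.exp (-(p + p ^ 2)) ≤ 1 - p := by
      rw [Real.exp_neg]
      rw [inv_le_iff_one_le_mul₀ (Real.exp_pos _)]
      linarith [key]
    have := (Real.le_log_iff_exp_le h1p).mpr this
    linarith
  have hLpos : 0 < -Real.log (1 - p) := lt_of_lt_of_le hp0 hL1
  have hLup : -Real.log (1 - p) ≤ N * f + N ^ 2 * f ^ 2 := by
    have : p ^ 2 ≤ (N * f) ^ 2 := by nlinarith
    nlinarith
  have hlog2 : (0:ℝ) < Real.log 2 := Real.log_pos (by norm_num)
  have hrw : -1 / Real.logb 2 (1 - p) = Real.log 2 / (-Real.log (1 - p)) := by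
    have hlogne : Real.log (1 - p) ≠ 0 := by
      intro h; rw [h] at hLpos; simp at hLpos
    rw [Real.logb]
    field_simp
  rw [hrw]
  constructor
  · apply div_le_div_of_nonneg_left hlog2.le hLpos hLup
  · apply div_le_div_of_nonneg_left hlog2.le hf0 (le_trans hpf hL1)
end
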